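/- Let H be a real Hilbert space with orthonormal basis {ψ_j}_{j∈ℕ}, let v ∈ H with coefficients d_j = ⟨v, ψ_j⟩, and let α_j > 0 with inf_j α_j > 0. Then the functional u ↦ (1/2)‖u − v‖² + Σ_j α_j |⟨u, ψ_j⟩| attains its unique minimum over H at u* = Σ_j S_{α_j}(d_j) ψ_j, where S_β denotes soft thresholding with threshold β. -/

import Mathlib

/-!
Soft thresholding is the proximal map of `β|·|`: for `s = S_β(x)` one has `x - s = β g` with `g`
a subgradient of `|·|` at `s`, and completing the square gives
`½(s - x)² + β|s| + ½(c - s)² ≤ ½(c - x)² + β|c|` for every real `c`. By Parseval the functional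
splits into these scalar problems along the basis, so `Ψ(u*) + ½‖u - u*‖² ≤ Ψ(u)` for every `u`.
As `Ψ(u*) ≤ Ψ(0) < ∞`, this gives both minimality and uniqueness.
-/

open scoped RealInnerProductSpace ENNReal

noncomputable def softThr (β x : ℝ) : ℝ := Real.sign x * max (|x| - β) 0

lemma softThr_of_abs_le {β x : ℝ} (h : |x| ≤ β) : softThr β x = 0 := by
  rw [softThr, max_eq_right (by linarith), mul_zero]

lemma softThr_of_lt {β x : ℝ} (hβ : 0 ≤ β) (h : β < x) : softThr β x = x - β := by
  rw [softThr, Real.sign_of_pos (by linarith), abs_of_pos (by linarith),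
    max_eq_left (by linarith), one_mul]

lemma softThr_of_lt_neg {β x : ℝ} (hβ : 0 ≤ β) (h : x < -β) : softThr β x = x + β := by
  rw [softThr, Real.sign_of_neg (by linarith), abs_of_neg (by linarith),
    max_eq_left (by linarith)]
  ring

lemma exists_subgradient_abs_softThr {β : ℝ} (hβ : 0 ≤ β) (x : ℝ) :
    ∃ g, |g| ≤ 1 ∧ g * softThr β x = |softThr β x| ∧ x - softThr β x = β * g := by
  rcases le_or_gt |x| β with h | h
  · rcases hβ.eq_or_lt with rfl | hβ
    · exact ⟨0, by simp, by simp [softThr_of_abs_le h], by simpa [softThr_of_abs_le h] using h⟩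
    · refine ⟨x / β, ?_, by simp [softThr_of_abs_le h], ?_⟩
      · rwa [abs_div, abs_of_pos hβ, div_le_one hβ]
      · rw [softThr_of_abs_le h, mul_div_cancel₀ _ hβ.ne', sub_zero]
  · rcases lt_abs.mp h with h | h
    · refine ⟨1, by simp, ?_, ?_⟩ <;> rw [softThr_of_lt hβ h]
      · rw [abs_of_nonneg (by linarith), one_mul]
      · ring
    · refine ⟨-1, by simp, ?_, ?_⟩ <;> rw [softThr_of_lt_neg hβ (by linarith)]
      · rw [abs_of_nonpos (by linarith)]; ring
      · ring

lemma softThr_add_le {β : ℝ} (hβ : 0 ≤ β) (x c : ℝ) :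
    1 / 2 * (softThr β x - x) ^ 2 + β * |softThr β x| + 1 / 2 * (c - softThr β x) ^ 2
      ≤ 1 / 2 * (c - x) ^ 2 + β * |c| := by
  obtain ⟨g, hg, hgs, hxs⟩ := exists_subgradient_abs_softThr hβ x
  have hgc : g * c ≤ |c| :=
    (le_abs_self _).trans (by rw [abs_mul]; exact mul_le_of_le_one_left (abs_nonneg c) hg)
  generalize softThr β x = s at *
  obtain rfl : x = s + β * g := by linarith
  rw [← hgs]
  linear_combination mul_le_mul_of_nonneg_left hgc hβ

lemma abs_softThr_le {β : ℝ} (hβ : 0 ≤ β) (x : ℝ) : |softThr β x| ≤ |x| := by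
  have := softThr_add_le hβ x 0
  refine sq_le_sq.mp ?_
  nlinarith [sq_nonneg (softThr β x - x), abs_nonneg (softThr β x), sq_abs x, sq_abs (softThr β x)]

theorem forall_le_and_eq_of_add_dist_sq_le {X : Type*} [MetricSpace X] {F : X → ℝ≥0∞} {x : X}
    (hx : F x ≠ ⊤) (hF : ∀ u, F x + ENNReal.ofReal (1 / 2 * dist u x ^ 2) ≤ F u) (u : X) :
    F x ≤ F u ∧ (F u = F x → u = x) := by
  refine ⟨le_self_add.trans (hF u), fun hu => ?_⟩
  have h : F x + ENNReal.ofReal (1 / 2 * dist u x ^ 2) ≤ F x + 0 := by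
    simpa [hu] using hF u
  have := ENNReal.le_of_add_le_add_left hx h
  rw [nonpos_iff_eq_zero, ENNReal.ofReal_eq_zero] at this
  exact dist_le_zero.mp (by nlinarith [dist_nonneg (x := u) (y := x)])

namespace HilbertBasis

variable {ι E : Type*} [NormedAddCommGroup E] [InnerProductSpace ℝ E] (b : HilbertBasis ι ℝ E)

lemma hasSum_repr_sq (x : E) : HasSum (fun i => b.repr x i ^ 2) (‖x‖ ^ 2) := by
  have h : (fun i => b.repr x i ^ 2) = fun i => ⟪x, b i⟫ * ⟪b i, x⟫ := by
    ext i
    rw [b.repr_apply_apply, real_inner_comm, sq]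
  rw [h, ← real_inner_self_eq_norm_sq]
  exact b.hasSum_inner_mul_inner x x

lemma ofReal_norm_sq_eq_tsum (x : E) :
    ENNReal.ofReal (‖x‖ ^ 2) = ∑' i, ENNReal.ofReal (b.repr x i ^ 2) := by
  rw [← (b.hasSum_repr_sq x).tsum_eq,
    ENNReal.ofReal_tsum_of_nonneg (fun _ => sq_nonneg _) (b.hasSum_repr_sq x).summable]

lemma repr_tsum_smul {f : ι → ℝ} (hf : Memℓp f 2) (i : ι) : b.repr (∑' j, f j • b j) i = f i := by
  rw [(b.hasSum_repr_symm ⟨f, hf⟩).tsum_eq, b.repr.apply_symm_apply]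

lemma inner_eq_repr (x : E) (i : ι) : ⟪x, b i⟫ = b.repr x i := by
  rw [b.repr_apply_apply, real_inner_comm]

noncomputable def lassoObjective (α : ι → ℝ) (v u : E) : ℝ≥0∞ :=
  ENNReal.ofReal (1 / 2 * ‖u - v‖ ^ 2) + ∑' i, ENNReal.ofReal (α i * |⟪u, b i⟫|)

noncomputable def softThreshold (α : ι → ℝ) (v : E) : E :=
  ∑' i, softThr (α i) (b.repr v i) • b i

variable {b} {α : ι → ℝ}

lemma lassoObjective_eq_tsum (hα : ∀ i, 0 ≤ α i) (v u : E) :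
    b.lassoObjective α v u =
      ∑' i, ENNReal.ofReal (1 / 2 * (b.repr u i - b.repr v i) ^ 2 + α i * |b.repr u i|) := by
  have half : (0 : ℝ) ≤ 1 / 2 := by norm_num
  rw [lassoObjective, ENNReal.ofReal_mul half, b.ofReal_norm_sq_eq_tsum, ← ENNReal.tsum_mul_left,
    ← ENNReal.tsum_add]
  refine tsum_congr fun i => ?_
  rw [← ENNReal.ofReal_mul half, ← ENNReal.ofReal_add (by positivity) (by have := hα i; positivity),
    map_sub, lp.coeFn_sub, Pi.sub_apply, inner_eq_repr]

lemma memℓp_softThr (hα : ∀ i, 0 ≤ α i) (v : E) : Memℓp (fun i => softThr (α i) (b.repr v i)) 2 :=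
  (lp.memℓp (b.repr v)).mono' fun i => by
    simpa only [Real.norm_eq_abs] using abs_softThr_le (hα i) (b.repr v i)

lemma repr_softThreshold (hα : ∀ i, 0 ≤ α i) (v : E) (i : ι) :
    b.repr (b.softThreshold α v) i = softThr (α i) (b.repr v i) :=
  b.repr_tsum_smul (memℓp_softThr hα v) i

lemma lassoObjective_softThreshold_add_le (hα : ∀ i, 0 ≤ α i) (v u : E) :
    b.lassoObjective α v (b.softThreshold α v) +
        ENNReal.ofReal (1 / 2 * dist u (b.softThreshold α v) ^ 2) ≤ b.lassoObjective α v u := by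
  have half : (0 : ℝ) ≤ 1 / 2 := by norm_num
  rw [lassoObjective_eq_tsum hα, lassoObjective_eq_tsum hα, dist_eq_norm, ENNReal.ofReal_mul half,
    b.ofReal_norm_sq_eq_tsum, ← ENNReal.tsum_mul_left, ← ENNReal.tsum_add]
  refine ENNReal.tsum_le_tsum fun i => ?_
  rw [← ENNReal.ofReal_mul half, ← ENNReal.ofReal_add (by have := hα i; positivity) (by positivity),
    map_sub, lp.coeFn_sub, Pi.sub_apply, repr_softThreshold hα]
  exact ENNReal.ofReal_le_ofReal (softThr_add_le (hα i) _ _)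

lemma lassoObjective_softThreshold_ne_top (hα : ∀ i, 0 ≤ α i) (v : E) :
    b.lassoObjective α v (b.softThreshold α v) ≠ ⊤ := by
  refine ne_top_of_le_ne_top ?_ (le_self_add.trans (lassoObjective_softThreshold_add_le hα v 0))
  simp only [lassoObjective, zero_sub, norm_neg, inner_zero_left, abs_zero, mul_zero,
    ENNReal.ofReal_zero, tsum_zero, add_zero]
  exact ENNReal.ofReal_ne_top

end HilbertBasis

theorem stmt_4_general {H : Type*} [NormedAddCommGroup H] [InnerProductSpace ℝ H]
    (ψ : HilbertBasis ℕ ℝ H) (v : H) (α : ℕ → ℝ) (hα : ∀ j, 0 < α j)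
    (d : ℕ → ℝ) (hd : ∀ j, d j = ⟪v, ψ j⟫)
    (Ψ : H → ℝ≥0∞)
    (hΨ : ∀ u, Ψ u = ENNReal.ofReal ((1 / 2) * ‖u - v‖ ^ 2) +
      ∑' j, ENNReal.ofReal (α j * |⟪u, ψ j⟫|))
    (ustar : H) (hustar : ustar = ∑' j, softThr (α j) (d j) • (ψ j : H)) :
    ∀ u : H, Ψ ustar ≤ Ψ u ∧ (Ψ u = Ψ ustar → u = ustar) := by
  have hα' : ∀ j, 0 ≤ α j := fun j => (hα j).le
  obtain rfl : Ψ = ψ.lassoObjective α v := funext hΨ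
  obtain rfl : d = fun j => ψ.repr v j := funext fun j => (hd j).trans (ψ.inner_eq_repr v j)
  subst hustar
  exact forall_le_and_eq_of_add_dist_sq_le (HilbertBasis.lassoObjective_softThreshold_ne_top hα' v)
    (HilbertBasis.lassoObjective_softThreshold_add_le hα' v)

/-- In a real Hilbert space with orthonormal basis `{ψ_j}`, with `v ∈ H`, `d_j = ⟨v, ψ_j⟩`,
and `α_j > 0` bounded below by a positive constant, the functional
`u ↦ (1/2)‖u − v‖² + Σ_j α_j |⟨u, ψ_j⟩|` (penalty valued in `[0, ∞]`) attains its unique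
minimum over `H` at `u* = Σ_j S_{α_j}(d_j) ψ_j`. -/
theorem stmt_4 {H : Type*} [NormedAddCommGroup H] [InnerProductSpace ℝ H] [CompleteSpace H]
    (ψ : HilbertBasis ℕ ℝ H) (v : H) (α : ℕ → ℝ) (hα : ∀ j, 0 < α j)
    (a : ℝ) (ha : 0 < a) (haα : ∀ j, a ≤ α j)
    (d : ℕ → ℝ) (hd : ∀ j, d j = ⟪v, ψ j⟫)
    (Ψ : H → ℝ≥0∞)
    (hΨ : ∀ u, Ψ u = ENNReal.ofReal ((1 / 2) * ‖u - v‖ ^ 2) +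
      ∑' j, ENNReal.ofReal (α j * |⟪u, ψ j⟫|))
    (ustar : H) (hustar : ustar = ∑' j, softThr (α j) (d j) • (ψ j : H)) :
    ∀ u : H, Ψ ustar ≤ Ψ u ∧ (Ψ u = Ψ ustar → u = ustar) :=
  stmt_4_general ψ v α hα d hd Ψ hΨ ustar hustar
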